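/- Let (D_λ)_{λ∈Λ} be a family of integral domains of finite character (every nonzero element lies in only finitely many maximal ideals), none of which is a field, and let R = ∏_{λ∈Λ} D_λ. Then the maximal ideals of R are exactly the ideals of the form (U), where U is an ultrafilter in the Boolean algebra B containing an element Y = (Y_λ)_{λ∈Λ} such that Y_λ is a finite set for all λ ∈ Λ. -/

import Mathlib

/-!
Common setup: `Λ` is an index set, `D λ` a family of commutative rings,
`R = ∏ λ, D λ` the product ring, and
`B = ∏ λ, P(max (D λ))` the product Boolean algebra of the power sets of the
sets of maximal ideals, realized as the Pi type `∀ l, Set (MaximalSpectrum (D l))`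
with its componentwise Boolean algebra structure (meet = componentwise ∩,
join = componentwise ∪, `⊥ = (∅)_λ`, complement componentwise, order = componentwise ⊆).
-/

variable {Λ : Type*} {D : Λ → Type*}

/-- `S(a) = (V(a_λ))_λ ∈ B`, where `V(x)` is the set of maximal ideals containing `x`. -/
def SFam [∀ l, CommRing (D l)] (a : ∀ l, D l) : ∀ l, Set (MaximalSpectrum (D l)) :=
  fun l => {P | a l ∈ P.asIdeal}

/-- `z(x) = {λ | x_λ = 0}`. -/
def ZFam [∀ l, CommRing (D l)] (x : ∀ l, D l) : Set Λ := {l | x l = 0}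

/-- A filter in a Boolean algebra: a nonempty subset not containing `⊥`, closed
under meets, and upward closed. -/
def IsBFilter {B : Type*} [BooleanAlgebra B] (U : Set B) : Prop :=
  U.Nonempty ∧ ⊥ ∉ U ∧ (∀ X ∈ U, ∀ Y ∈ U, X ⊓ Y ∈ U) ∧ (∀ Y ∈ U, ∀ Z, Y ≤ Z → Z ∈ U)

/-- An ultrafilter in a Boolean algebra: a filter containing `Y` or `Yᶜ` for every `Y`. -/
def IsBUltrafilter {B : Type*} [BooleanAlgebra B] (U : Set B) : Prop :=
  IsBFilter U ∧ ∀ Y, Y ∈ U ∨ Yᶜ ∈ U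

/-- Property (+): for all `r` and all nonzero `a` there is `d` lying in every maximal
ideal containing `a` but not `r`, and in no maximal ideal containing `r`. -/
def PropertyPlus (A : Type*) [CommRing A] : Prop :=
  ∀ r a : A, a ≠ 0 → ∃ d : A,
    (∀ M : Ideal A, M.IsMaximal → a ∈ M → r ∉ M → d ∈ M) ∧
    (∀ M : Ideal A, M.IsMaximal → r ∈ M → d ∉ M)

/-- Property (++): for every `r` there is `d` with `D(r) = V(d)`, i.e. the maximal
ideals containing `d` are exactly those not containing `r`. -/
def PropertyPlusPlus (A : Type*) [CommRing A] : Prop :=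
  ∀ r : A, ∃ d : A, ∀ P : MaximalSpectrum A, d ∈ P.asIdeal ↔ r ∉ P.asIdeal

/-!
A maximal ideal `M` of `R` contains an element `t` with no zero component: otherwise, for a
family `p` of nonzero nonunits, `p ∉ M` and some `i ∈ M` coprime to `p` has a zero component
`i λ = 0`, forcing `p λ` to be a unit. By finite character every `V(t λ)` is finite, and inside
these finite sets prime avoidance realises any `Y ∈ B`, and any meet `S(m) ∧ S(m')` with
`m, m' ∈ M`, as the trace of `S` of a single element (of `M`, for meets). Hence
`{Y | S(m) ∧ S(t) ≤ Y for some m ∈ M}` is an ultrafilter, and `M = (U)` because `r ∉ M` is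
coprime to some element of `M`.

Conversely, if `Y ∈ U` has finite components and `x ∉ (U)`, then `Y ∧ ¬S(x) ∈ U`, and since `x`
is invertible modulo each of the finitely many maximal ideals in `(Y ∧ ¬S(x)) λ`, some `z` has
`1 - z x ∈ (U)`; so `(U)` is maximal.
-/

section MaximalSpectrum

variable {A : Type*} [CommRing A]

theorem isCoprime_iff_forall_maximalSpectrum {a b : A} :
    IsCoprime a b ↔ ∀ P : MaximalSpectrum A, ¬(a ∈ P.asIdeal ∧ b ∈ P.asIdeal) := by
  refine ⟨fun h P hP => ?_, fun h => ?_⟩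
  · have := P.isMaximal.isPrime
    exact Ideal.IsPrime.notMem_of_isCoprime_of_mem h hP.1 hP.2
  · rw [← Ideal.isCoprime_span_singleton_iff, Ideal.isCoprime_iff_sup_eq]
    by_contra hne
    obtain ⟨Q, hQ, hle⟩ := Ideal.exists_le_maximal _ hne
    exact h ⟨Q, hQ⟩ ⟨hle (Ideal.mem_sup_left (Ideal.mem_span_singleton_self a)),
      hle (Ideal.mem_sup_right (Ideal.mem_span_singleton_self b))⟩

theorem Ideal.IsMaximal.exists_isCoprime_of_notMem {M : Ideal A} (hM : M.IsMaximal) {r : A}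
    (hr : r ∉ M) : ∃ i ∈ M, IsCoprime r i :=
  let ⟨y, i, hi, h⟩ := hM.exists_inv hr
  ⟨i, hi, y, 1, by rwa [one_mul]⟩

theorem exists_mem_forall_notMem_of_finite {F : Set (MaximalSpectrum A)} (hF : F.Finite)
    {I : Ideal A} (hI : ∀ P ∈ F, ¬I ≤ P.asIdeal) : ∃ c ∈ I, ∀ P ∈ F, c ∉ P.asIdeal := by
  have hprime : ∀ J ∈ MaximalSpectrum.asIdeal '' F, J ≠ ⊤ → J ≠ ⊤ → J.IsPrime := by
    rintro _ ⟨P, -, rfl⟩ - -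
    exact P.isMaximal.isPrime
  have hnot := (Ideal.subset_union_prime_finite (hF.image _) (f := id) ⊤ ⊤ hprime (I := I)).not
  obtain ⟨c, hcI, hc⟩ := Set.not_subset.1 <| hnot.2 <| by
    rintro ⟨_, ⟨P, hP, rfl⟩, hle⟩
    exact hI P hP hle
  exact ⟨c, hcI, fun P hP hcP => hc (Set.mem_biUnion (Set.mem_image_of_mem _ hP) hcP)⟩

theorem exists_forall_mem_iff_mem_of_finite {F : Set (MaximalSpectrum A)} (hF : F.Finite)
    (Y : Set (MaximalSpectrum A)) : ∃ r : A, ∀ P ∈ F, r ∈ P.asIdeal ↔ P ∈ Y := by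
  have hFY := hF.inter_of_left Y
  have hI : ∀ Q ∈ F \ Y, ¬hFY.toFinset.inf MaximalSpectrum.asIdeal ≤ Q.asIdeal := by
    intro Q hQ hle
    obtain ⟨P, hPFY, hPQ⟩ := (Ideal.IsPrime.inf_le' Q.isMaximal.isPrime).1 hle
    have hPQ : P = Q := MaximalSpectrum.ext (P.isMaximal.eq_of_le Q.isMaximal.ne_top hPQ)
    exact hQ.2 (hPQ ▸ (hFY.mem_toFinset.1 hPFY).2)
  obtain ⟨r, hrI, hr⟩ := exists_mem_forall_notMem_of_finite (hF.sdiff (t := Y)) hI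
  refine ⟨r, fun P hP => ⟨fun hrP => by_contra fun hPY => hr P ⟨hP, hPY⟩ hrP, fun hPY => ?_⟩⟩
  exact Finset.inf_le (f := MaximalSpectrum.asIdeal) (hFY.mem_toFinset.2 ⟨hP, hPY⟩) hrI

theorem exists_forall_mul_add_mem_iff {F : Set (MaximalSpectrum A)} (hF : F.Finite) (a b : A) :
    ∃ x y : A, ∀ P ∈ F, x * a + y * b ∈ P.asIdeal ↔ a ∈ P.asIdeal ∧ b ∈ P.asIdeal := by
  have hI : ∀ P ∈ {P ∈ F | ¬(a ∈ P.asIdeal ∧ b ∈ P.asIdeal)},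
      ¬Ideal.span {a, b} ≤ P.asIdeal := fun P hP hle =>
    hP.2 ⟨hle (Ideal.subset_span (by simp)), hle (Ideal.subset_span (by simp))⟩
  obtain ⟨c, hc, hcP⟩ := exists_mem_forall_notMem_of_finite (hF.subset fun _ hP => hP.1) hI
  obtain ⟨x, y, rfl⟩ := Ideal.mem_span_pair.1 hc
  refine ⟨x, y, fun P hP => ⟨fun h => by_contra fun hab => hcP P ⟨hP, hab⟩ h, fun h => ?_⟩⟩
  exact P.asIdeal.add_mem (P.asIdeal.mul_mem_left x h.1) (P.asIdeal.mul_mem_left y h.2)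

theorem exists_forall_one_sub_mul_mem {W : Set (MaximalSpectrum A)} (hW : W.Finite) {x : A}
    (hx : ∀ P ∈ W, x ∉ P.asIdeal) : ∃ z : A, ∀ P ∈ W, 1 - z * x ∈ P.asIdeal := by
  have hcop : IsCoprime (Ideal.span {x}) (⨅ P ∈ hW.toFinset, P.asIdeal) := by
    refine Ideal.isCoprime_biInf fun P hP => ?_
    obtain ⟨y, i, hi, h⟩ := P.isMaximal.exists_inv (hx P (hW.mem_toFinset.1 hP))
    exact Ideal.isCoprime_iff_exists.2
      ⟨y * x, Ideal.mul_mem_left _ y (Ideal.mem_span_singleton_self x), i, hi, h⟩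
  obtain ⟨u, hu, v, hv, huv⟩ := hcop.exists
  obtain ⟨z, rfl⟩ := Ideal.mem_span_singleton'.1 hu
  refine ⟨z, fun P hP => ?_⟩
  rw [← huv, add_sub_cancel_left]
  exact Ideal.mem_iInf.1 (Ideal.mem_iInf.1 hv P) (hW.mem_toFinset.2 hP)

end MaximalSpectrum

theorem Pi.isCoprime_iff {ι : Type*} {R : ι → Type*} [∀ i, CommSemiring (R i)]
    {a b : ∀ i, R i} : IsCoprime a b ↔ ∀ i, IsCoprime (a i) (b i) := by
  refine ⟨fun ⟨u, v, h⟩ i => ⟨u i, v i, congrFun h i⟩, fun h => ?_⟩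
  choose u v huv using h
  exact ⟨u, v, funext huv⟩

section ProductRing

variable [∀ l, CommRing (D l)]

theorem isCoprime_iff_SFam_inf_eq_bot {a b : ∀ l, D l} :
    IsCoprime a b ↔ SFam a ⊓ SFam b = ⊥ := by
  rw [Pi.isCoprime_iff, funext_iff]
  refine forall_congr' fun l => ?_
  rw [isCoprime_iff_forall_maximalSpectrum, Pi.inf_apply, Pi.bot_apply, Set.bot_eq_empty,
    Set.eq_empty_iff_forall_notMem]
  rfl

theorem SFam_one : SFam (1 : ∀ l, D l) = ⊥ :=
  funext fun _ => Set.eq_empty_of_forall_notMem fun P hP =>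
    P.isMaximal.ne_top ((Ideal.eq_top_iff_one _).2 hP)

theorem exists_forall_ne_zero_mem [∀ l, Nontrivial (D l)] (hnf : ∀ l, ¬IsField (D l))
    {M : Ideal (∀ l, D l)} (hM : M.IsMaximal) : ∃ t ∈ M, ∀ l, t l ≠ 0 := by
  choose p hp0 hpu using fun l => Ring.exists_not_isUnit_of_not_isField (hnf l)
  by_cases hpM : p ∈ M
  · exact ⟨p, hpM, hp0⟩
  obtain ⟨i, hiM, hpi⟩ := hM.exists_isCoprime_of_notMem hpM
  refine ⟨i, hiM, fun l hil => hpu l ?_⟩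
  have hpl := Pi.isCoprime_iff.1 hpi l
  rwa [hil, isCoprime_zero_right] at hpl

def filterOfIdeal (M : Ideal (∀ l, D l)) (t : ∀ l, D l) :
    Set (∀ l, Set (MaximalSpectrum (D l))) :=
  {Y | ∃ m ∈ M, SFam m ⊓ SFam t ≤ Y}

section filterOfIdeal

variable {M : Ideal (∀ l, D l)} {t : ∀ l, D l}

theorem SFam_mem_filterOfIdeal {m : ∀ l, D l} (hm : m ∈ M) : SFam m ∈ filterOfIdeal M t :=
  ⟨m, hm, inf_le_left⟩

theorem filterOfIdeal_mono {Y Z : ∀ l, Set (MaximalSpectrum (D l))}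
    (hY : Y ∈ filterOfIdeal M t) (hYZ : Y ≤ Z) : Z ∈ filterOfIdeal M t :=
  let ⟨m, hm, hle⟩ := hY
  ⟨m, hm, hle.trans hYZ⟩

theorem bot_notMem_filterOfIdeal (hM : M ≠ ⊤) (ht : t ∈ M) : ⊥ ∉ filterOfIdeal M t := by
  rintro ⟨m, hm, hle⟩
  obtain ⟨u, v, huv⟩ := isCoprime_iff_SFam_inf_eq_bot.2 (le_bot_iff.1 hle)
  refine hM ((Ideal.eq_top_iff_one M).2 ?_)
  rw [← huv]
  exact M.add_mem (M.mul_mem_left u hm) (M.mul_mem_left v ht)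

theorem inf_mem_filterOfIdeal (hfin : ∀ l, (SFam t l).Finite)
    {X Y : ∀ l, Set (MaximalSpectrum (D l))} (hX : X ∈ filterOfIdeal M t)
    (hY : Y ∈ filterOfIdeal M t) : X ⊓ Y ∈ filterOfIdeal M t := by
  obtain ⟨m₁, hm₁, hX⟩ := hX
  obtain ⟨m₂, hm₂, hY⟩ := hY
  choose x y hxy using fun l => exists_forall_mul_add_mem_iff (hfin l) (m₁ l) (m₂ l)
  refine ⟨x * m₁ + y * m₂, M.add_mem (M.mul_mem_left x hm₁) (M.mul_mem_left y hm₂), ?_⟩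
  rintro l P ⟨hP, htP⟩
  obtain ⟨hm₁P, hm₂P⟩ := (hxy l P htP).1 hP
  exact ⟨hX l ⟨hm₁P, htP⟩, hY l ⟨hm₂P, htP⟩⟩

theorem compl_SFam_mem_filterOfIdeal (hM : M.IsMaximal) {r : ∀ l, D l} (hr : r ∉ M) :
    (SFam r)ᶜ ∈ filterOfIdeal M t := by
  obtain ⟨i, hiM, hri⟩ := hM.exists_isCoprime_of_notMem hr
  exact filterOfIdeal_mono (SFam_mem_filterOfIdeal hiM)
    (le_compl_iff_disjoint_left.2 (disjoint_iff.2 (isCoprime_iff_SFam_inf_eq_bot.1 hri)))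

variable (hM : M.IsMaximal) (ht : t ∈ M) (hfin : ∀ l, (SFam t l).Finite)
include hM ht hfin

theorem mem_iff_SFam_mem_filterOfIdeal (r : ∀ l, D l) : r ∈ M ↔ SFam r ∈ filterOfIdeal M t := by
  refine ⟨SFam_mem_filterOfIdeal, fun hr => by_contra fun hrM => ?_⟩
  have := inf_mem_filterOfIdeal hfin hr (compl_SFam_mem_filterOfIdeal hM hrM)
  exact bot_notMem_filterOfIdeal hM.ne_top ht (inf_compl_self (SFam r) ▸ this)

theorem isBUltrafilter_filterOfIdeal : IsBUltrafilter (filterOfIdeal M t) := by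
  refine ⟨⟨⟨_, SFam_mem_filterOfIdeal ht⟩, bot_notMem_filterOfIdeal hM.ne_top ht,
    fun X hX Y hY => inf_mem_filterOfIdeal hfin hX hY, fun Y hY Z => filterOfIdeal_mono hY⟩,
    fun Y => ?_⟩
  choose r hr using fun l => exists_forall_mem_iff_mem_of_finite (hfin l) (Y l)
  by_cases hrM : r ∈ M
  · exact Or.inl ⟨r, hrM, fun l P ⟨hrP, htP⟩ => (hr l P htP).1 hrP⟩
  refine Or.inr (filterOfIdeal_mono (inf_mem_filterOfIdeal hfin
    (compl_SFam_mem_filterOfIdeal hM hrM) (SFam_mem_filterOfIdeal ht)) ?_)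
  rintro l P ⟨hrP, htP⟩ hPY
  exact hrP ((hr l P htP).2 hPY)

end filterOfIdeal

def idealOfBFilter {U : Set (∀ l, Set (MaximalSpectrum (D l)))} (hU : IsBFilter U) :
    Ideal (∀ l, D l) where
  carrier := {a | SFam a ∈ U}
  zero_mem' := hU.2.2.2 _ hU.1.some_mem _ fun _ P _ => P.asIdeal.zero_mem
  add_mem' ha hb := hU.2.2.2 _ (hU.2.2.1 _ ha _ hb) _ fun _ P hP => P.asIdeal.add_mem hP.1 hP.2
  smul_mem' c _ ha := hU.2.2.2 _ ha _ fun l P hP => P.asIdeal.mul_mem_left (c l) hP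

theorem isMaximal_idealOfBFilter {U : Set (∀ l, Set (MaximalSpectrum (D l)))}
    (hU : IsBUltrafilter U) {Y : ∀ l, Set (MaximalSpectrum (D l))} (hYU : Y ∈ U)
    (hYfin : ∀ l, (Y l).Finite) : (idealOfBFilter hU.1).IsMaximal := by
  have ⟨⟨_, hbot, hinf, hmono⟩, hultra⟩ := hU
  refine Ideal.isMaximal_iff.2 ⟨fun h1 => hbot (SFam_one (D := D) ▸ h1), fun J x hJ hx hxJ => ?_⟩
  have hW := hinf _ hYU _ ((hultra (SFam x)).resolve_left hx)
  choose z hz using fun l =>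
    exists_forall_one_sub_mul_mem ((hYfin l).subset inf_le_left) fun _ hP => hP.2
  have hzx : 1 - z * x ∈ idealOfBFilter hU.1 := hmono _ hW _ hz
  simpa using J.add_mem (J.mul_mem_left z hxJ) (hJ hzx)

end ProductRing

/-- If every `D l` is an integral domain of finite character (every nonzero element
lies in only finitely many maximal ideals), not a field, then the maximal ideals of
`R` are exactly the ideals `(U)` for ultrafilters `U` in `B` containing an element
`Y` all of whose components are finite sets. -/
theorem stmt_9 [∀ l, CommRing (D l)] [∀ l, IsDomain (D l)]
    (hnf : ∀ l, ¬IsField (D l))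
    (hfc : ∀ l, ∀ a : D l, a ≠ 0 → {P : MaximalSpectrum (D l) | a ∈ P.asIdeal}.Finite) :
    (∀ M : Ideal (∀ l, D l), M.IsMaximal →
      ∃ U : Set (∀ l, Set (MaximalSpectrum (D l))), IsBUltrafilter U ∧
        (∃ Y ∈ U, ∀ l, (Y l).Finite) ∧
        ∀ r : ∀ l, D l, r ∈ M ↔ SFam r ∈ U) ∧
    (∀ U : Set (∀ l, Set (MaximalSpectrum (D l))), IsBUltrafilter U →
      (∃ Y ∈ U, ∀ l, (Y l).Finite) →
      ∃ M : Ideal (∀ l, D l), M.IsMaximal ∧ ∀ r : ∀ l, D l, r ∈ M ↔ SFam r ∈ U) := by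
  refine ⟨fun M hM => ?_, fun U hU ⟨Y, hYU, hYfin⟩ => ?_⟩
  · obtain ⟨t, htM, ht0⟩ := exists_forall_ne_zero_mem hnf hM
    have hfin : ∀ l, (SFam t l).Finite := fun l => hfc l (t l) (ht0 l)
    exact ⟨filterOfIdeal M t, isBUltrafilter_filterOfIdeal hM htM hfin,
      ⟨SFam t, SFam_mem_filterOfIdeal htM, hfin⟩, mem_iff_SFam_mem_filterOfIdeal hM htM hfin⟩
  · exact ⟨idealOfBFilter hU.1, isMaximal_idealOfBFilter hU hYU hYfin, fun _ => Iff.rfl⟩
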